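/- arXiv:2602.09101 — 5 statements merged into one kernel-verified Lean document; each statement's English description precedes it below -/
import Mathlib

section
/- Let α > 0 and 0 ≤ β < 1/2, set ρ := √(1−2β) and q_β := exp(−π/ρ). Define the positive and negative parts K₊(s) := max{K_β(s), 0} and K₋(s) := max{−K_β(s), 0}, and the truncated integrals A₊(t) := ∫₀ᵗ K₊(s) ds and A₋(t) := ∫₀ᵗ K₋(s) ds. Then A₋(t) ≤ q_β · A₊(t) for all t ≥ 0. -/
open Real

theorem stmt1 (α β : ℝ) (hα : 0 < α) (hβ0 : 0 ≤ β) (hβ : β < 1/2)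
    (ρ q : ℝ) (hρ : ρ = Real.sqrt (1 - 2*β)) (hq : q = Real.exp (-π/ρ))
    (K Kp Km : ℝ → ℝ)
    (hK : ∀ s : ℝ, K s = (2/ρ) * Real.exp (-s/α) * Real.sin (ρ * s / α))
    (hKp : ∀ s : ℝ, Kp s = max (K s) 0)
    (hKm : ∀ s : ℝ, Km s = max (-K s) 0) :
    ∀ t ≥ (0:ℝ), (∫ s in (0:ℝ)..t, Km s) ≤ q * ∫ s in (0:ℝ)..t, Kp s := by
  have hρ0 : 0 < ρ := by
    rw [hρ]; apply Real.sqrt_pos.mpr; linarith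
  have hq0 : 0 < q := by rw [hq]; exact Real.exp_pos _
  set T : ℝ := π * α / ρ with hT
  have hT0 : 0 < T := by positivity
  have hαne : α ≠ 0 := ne_of_gt hα
  have hρne : ρ ≠ 0 := ne_of_gt hρ0
  -- continuity
  have hKfun : K = fun s => (2/ρ) * Real.exp (-s/α) * Real.sin (ρ * s / α) := funext hK
  have hcK : Continuous K := by
    rw [hKfun]
    exact (continuous_const.mul (Real.continuous_exp.comp
      (continuous_id.neg.div_const α))).mul (Real.continuous_sin.comp
      ((continuous_const.mul continuous_id).div_const α))
  have hcKp : Continuous Kp := by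
    have : Kp = fun s => max (K s) 0 := funext hKp
    rw [this]; exact hcK.max continuous_const
  have hcKm : Continuous Km := by
    have : Km = fun s => max (-K s) 0 := funext hKm
    rw [this]; exact hcK.neg.max continuous_const
  -- Kp nonneg
  have hKpnn : ∀ s, 0 ≤ Kp s := fun s => by rw [hKp]; exact le_max_right _ _
  have hKmnn : ∀ s, 0 ≤ Km s := fun s => by rw [hKm]; exact le_max_right _ _
  -- K nonneg on [0,T]
  have hKnn : ∀ s ∈ Set.Icc (0:ℝ) T, 0 ≤ K s := by
    intro s hs
    rw [hK]
    have h1 : 0 ≤ ρ * s / α := by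
      have := hs.1; positivity
    have h2 : ρ * s / α ≤ π := by
      have : ρ * s / α ≤ ρ * T / α := by
        gcongr
        · exact hs.2
      have hTpi : ρ * T / α = π := by rw [hT]; field_simp
      linarith [this, hTpi ▸ this]
    have := Real.sin_nonneg_of_nonneg_of_le_pi h1 h2
    positivity
  have hKmzero : ∀ s ∈ Set.Icc (0:ℝ) T, Km s = 0 := by
    intro s hs
    rw [hKm]
    exact max_eq_right (by linarith [hKnn s hs])
  -- shift identity
  have hKshift : ∀ u, K (u + T) = -q * K u := by
    intro u
    rw [hK, hK, hq]
    have h1 : -(u + T) / α = -u/α + (-π/ρ) := by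
      rw [hT]; field_simp; ring
    have h2 : ρ * (u + T) / α = ρ * u / α + π := by
      rw [hT]; field_simp
    rw [h1, h2, Real.exp_add, Real.sin_add_pi]
    ring
  have hKmshift : ∀ u, Km (u + T) = q * Kp u := by
    intro u
    rw [hKm, hKp, hKshift u, mul_max_of_nonneg _ _ (le_of_lt hq0), mul_zero]
    congr 1
    ring
  intro t ht
  by_cases htT : t ≤ T
  · -- Km = 0 on [0,t]
    have hz : (∫ s in (0:ℝ)..t, Km s) = 0 := by
      have hcon : (∫ s in (0:ℝ)..t, Km s) = ∫ s in (0:ℝ)..t, (0:ℝ) := by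
        apply intervalIntegral.integral_congr
        intro s hs
        rw [Set.uIcc_of_le ht] at hs
        exact hKmzero s ⟨hs.1, le_trans hs.2 htT⟩
      simp [hcon]
    rw [hz]
    apply mul_nonneg (le_of_lt hq0)
    exact intervalIntegral.integral_nonneg ht (fun s _ => hKpnn s)
  · push_neg at htT
    have hTt : T ≤ t := le_of_lt htT
    have hint : ∀ a b : ℝ, IntervalIntegrable Km MeasureTheory.volume a b :=
      fun a b => hcKm.intervalIntegrable a b
    have hsplit : (∫ s in (0:ℝ)..t, Km s) =
        (∫ s in (0:ℝ)..T, Km s) + ∫ s in T..t, Km s :=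
      (intervalIntegral.integral_add_adjacent_intervals (hint 0 T) (hint T t)).symm
    have hz : (∫ s in (0:ℝ)..T, Km s) = 0 := by
      have hcon : (∫ s in (0:ℝ)..T, Km s) = ∫ s in (0:ℝ)..T, (0:ℝ) := by
        apply intervalIntegral.integral_congr
        intro s hs
        rw [Set.uIcc_of_le (le_of_lt hT0)] at hs
        exact hKmzero s hs
      simp [hcon]
    have hshiftint : (∫ s in T..t, Km s) = ∫ u in (0:ℝ)..(t - T), Km (u + T) := by
      rw [intervalIntegral.integral_comp_add_right (fun s => Km s) T]
      norm_num
    have hqint : (∫ u in (0:ℝ)..(t - T), Km (u + T)) = q * ∫ u in (0:ℝ)..(t - T), Kp u := by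
      rw [← intervalIntegral.integral_const_mul]
      apply intervalIntegral.integral_congr
      intro u _
      exact hKmshift u
    have hmono : (∫ u in (0:ℝ)..(t - T), Kp u) ≤ ∫ s in (0:ℝ)..t, Kp s := by
      have hintp : ∀ a b : ℝ, IntervalIntegrable Kp MeasureTheory.volume a b :=
        fun a b => hcKp.intervalIntegrable a b
      have : (∫ s in (0:ℝ)..t, Kp s) =
          (∫ u in (0:ℝ)..(t - T), Kp u) + ∫ u in (t - T)..t, Kp u :=
        (intervalIntegral.integral_add_adjacent_intervals (hintp 0 (t-T)) (hintp (t-T) t)).symm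
      have h2 : 0 ≤ ∫ u in (t - T)..t, Kp u :=
        intervalIntegral.integral_nonneg (by linarith) (fun s _ => hKpnn s)
      linarith
    calc (∫ s in (0:ℝ)..t, Km s) = q * ∫ u in (0:ℝ)..(t - T), Kp u := by
          rw [hsplit, hz, zero_add, hshiftint, hqint]
      _ ≤ q * ∫ s in (0:ℝ)..t, Kp s :=
          mul_le_mul_of_nonneg_left hmono (le_of_lt hq0)
end

section
/- Let α > 0 and 0 ≤ β < 1/2, set ρ := √(1−2β) and q_β := exp(−π/ρ). Let r : ℝ → ℝ be continuous with r(τ) ≥ 0 for all τ, and fix t ≥ 0. If inf_{0 ≤ s ≤ t} r(t−s) ≥ q_β · sup_{0 ≤ s ≤ t} r(t−s), then the continuous second moment v(t) := ((1−β)/α) · ∫₀ᵗ K_β(s) · r(t−s) ds satisfies v(t) ≥ 0. -/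
open Real

theorem stmt2 (α β : ℝ) (hα : 0 < α) (hβ0 : 0 ≤ β) (hβ : β < 1/2)
    (ρ q : ℝ) (hρ : ρ = Real.sqrt (1 - 2*β)) (hq : q = Real.exp (-π/ρ))
    (K : ℝ → ℝ)
    (hK : ∀ s : ℝ, K s = (2/ρ) * Real.exp (-s/α) * Real.sin (ρ * s / α))
    (r : ℝ → ℝ) (hr_cont : Continuous r) (hr_nonneg : ∀ τ : ℝ, 0 ≤ r τ)
    (t : ℝ) (ht : 0 ≤ t)
    (hcond : q * sSup ((fun s => r (t - s)) '' Set.Icc 0 t)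
      ≤ sInf ((fun s => r (t - s)) '' Set.Icc 0 t)) :
    0 ≤ ((1 - β)/α) * ∫ s in (0:ℝ)..t, K s * r (t - s) := by
  have h2β : (0:ℝ) < 1 - 2*β := by linarith
  have hρ0 : 0 < ρ := by rw [hρ]; exact Real.sqrt_pos.mpr h2β
  have hq0 : 0 < q := by rw [hq]; exact Real.exp_pos _
  have hαne : α ≠ 0 := hα.ne'
  have hρne : ρ ≠ 0 := hρ0.ne'
  set P : ℝ := π * α / ρ with hP
  have hP0 : 0 < P := by
    have := Real.pi_pos
    positivity
  -- continuity of K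
  have hKc : Continuous K := by
    have hKfun : K = fun s => (2/ρ) * Real.exp (-s/α) * Real.sin (ρ * s / α) := funext hK
    rw [hKfun]; fun_prop
  -- shift identity
  have hKshift : ∀ s : ℝ, K (s + P) = -q * K s := by
    intro s
    rw [hK, hK, hq]
    have h1 : -(s + P)/α = -s/α + (-π/ρ) := by
      rw [hP]; field_simp; ring
    have h2 : ρ * (s + P) / α = ρ * s / α + π := by
      rw [hP]; field_simp
    rw [h1, h2, Real.exp_add, Real.sin_add_pi]
    ring
  -- K nonneg on [0,P]
  have hKpos : ∀ s ∈ Set.Icc (0:ℝ) P, 0 ≤ K s := by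
    intro s hs
    rw [hK]
    have h1 : 0 ≤ ρ * s / α := div_nonneg (mul_nonneg hρ0.le hs.1) hα.le
    have h2 : ρ * s / α ≤ π := by
      have hmono : ρ * s / α ≤ ρ * P / α :=
        div_le_div_of_nonneg_right (mul_le_mul_of_nonneg_left hs.2 hρ0.le) hα.le
      have hPeq : ρ * P / α = π := by rw [hP]; field_simp
      linarith
    have := Real.sin_nonneg_of_nonneg_of_le_pi h1 h2
    positivity
  set Kp : ℝ → ℝ := fun s => max (K s) 0 with hKp
  set Kn : ℝ → ℝ := fun s => max (-K s) 0 with hKn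
  have hKpc : Continuous Kp := hKc.max continuous_const
  have hKnc : Continuous Kn := hKc.neg.max continuous_const
  have hKpnn : ∀ s, 0 ≤ Kp s := fun s => le_max_right _ _
  have hKnnn : ∀ s, 0 ≤ Kn s := fun s => le_max_right _ _
  have hKnshift : ∀ s : ℝ, Kn (s + P) = q * Kp s := by
    intro s
    simp only [hKn, hKp, hKshift s, neg_mul, neg_neg]
    rcases le_total 0 (K s) with h | h
    · rw [max_eq_left (mul_nonneg hq0.le h), max_eq_left h]
    · rw [max_eq_right (mul_nonpos_of_nonneg_of_nonpos hq0.le h), max_eq_right h, mul_zero]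
  -- sup and inf
  set S := (fun s => r (t - s)) '' Set.Icc 0 t with hS
  set m := sInf S with hm
  set M := sSup S with hM
  have hSne : S.Nonempty := ⟨r (t - 0), ⟨0, ⟨le_refl 0, ht⟩, rfl⟩⟩
  have hScomp : IsCompact S :=
    isCompact_Icc.image (hr_cont.comp (continuous_const.sub continuous_id))
  have hm_le : ∀ s ∈ Set.Icc (0:ℝ) t, m ≤ r (t - s) := fun s hs =>
    csInf_le hScomp.bddBelow ⟨s, hs, rfl⟩
  have hle_M : ∀ s ∈ Set.Icc (0:ℝ) t, r (t - s) ≤ M := fun s hs =>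
    le_csSup hScomp.bddAbove ⟨s, hs, rfl⟩
  have hm0 : 0 ≤ m := le_csInf hSne (by rintro x ⟨s, _, rfl⟩; exact hr_nonneg _)
  have hM0 : 0 ≤ M :=
    hm0.trans (csInf_le_csSup hSne hScomp.bddBelow hScomp.bddAbove)
  -- integrability
  have hint1 : IntervalIntegrable (fun s => K s * r (t - s)) MeasureTheory.volume 0 t :=
    (hKc.mul (hr_cont.comp (continuous_const.sub continuous_id))).intervalIntegrable 0 t
  have hint2 : IntervalIntegrable (fun s => m * Kp s - M * Kn s) MeasureTheory.volume 0 t :=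
    ((continuous_const.mul hKpc).sub (continuous_const.mul hKnc)).intervalIntegrable 0 t
  -- step 1 : pointwise lower bound
  have step1 : ∫ s in (0:ℝ)..t, (m * Kp s - M * Kn s)
      ≤ ∫ s in (0:ℝ)..t, K s * r (t - s) := by
    apply intervalIntegral.integral_mono_on ht hint2 hint1
    intro s hs
    have h1 := hm_le s hs
    have h2 := hle_M s hs
    rcases le_total 0 (K s) with hks | hks
    · have e1 : Kp s = K s := max_eq_left hks
      have e2 : Kn s = 0 := max_eq_right (neg_nonpos.mpr hks)
      rw [e1, e2]
      nlinarith
    · have e1 : Kp s = 0 := max_eq_right hks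
      have e2 : Kn s = -K s := max_eq_left (neg_nonneg.mpr hks)
      rw [e1, e2]
      nlinarith
  -- step 2 : ∫ Kn ≤ q * ∫ Kp
  have hIp0 : 0 ≤ ∫ s in (0:ℝ)..t, Kp s :=
    intervalIntegral.integral_nonneg ht (fun s _ => hKpnn s)
  have step2 : (∫ s in (0:ℝ)..t, Kn s) ≤ q * ∫ s in (0:ℝ)..t, Kp s := by
    have hcomp : (∫ u in (-P)..(t - P), Kn (u + P)) = ∫ s in (0:ℝ)..t, Kn s := by
      rw [intervalIntegral.integral_comp_add_right Kn P]
      norm_num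
    have hintA : IntervalIntegrable (fun u => Kn (u + P)) MeasureTheory.volume (-P) 0 :=
      (hKnc.comp (continuous_id.add continuous_const)).intervalIntegrable _ _
    have hintB : IntervalIntegrable (fun u => Kn (u + P)) MeasureTheory.volume 0 (t - P) :=
      (hKnc.comp (continuous_id.add continuous_const)).intervalIntegrable _ _
    have hsplit : (∫ u in (-P)..(t - P), Kn (u + P))
        = (∫ u in (-P)..(0:ℝ), Kn (u + P)) + ∫ u in (0:ℝ)..(t - P), Kn (u + P) :=
      (intervalIntegral.integral_add_adjacent_intervals hintA hintB).symm
    have hzero : (∫ u in (-P)..(0:ℝ), Kn (u + P)) = 0 := by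
      rw [intervalIntegral.integral_congr (g := fun _ => (0:ℝ))]
      · simp
      · intro u hu
        rw [Set.uIcc_of_le (by linarith : -P ≤ (0:ℝ))] at hu
        have : 0 ≤ K (u + P) := hKpos (u + P) ⟨by linarith [hu.1], by linarith [hu.2]⟩
        exact max_eq_right (neg_nonpos.mpr this)
    have hshiftint : (∫ u in (0:ℝ)..(t - P), Kn (u + P))
        = q * ∫ u in (0:ℝ)..(t - P), Kp u := by
      rw [← intervalIntegral.integral_const_mul]
      apply intervalIntegral.integral_congr
      intro u _
      exact hKnshift u
    have htail : (∫ u in (0:ℝ)..(t - P), Kp u) ≤ ∫ s in (0:ℝ)..t, Kp s := by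
      have hsplit2 : (∫ s in (0:ℝ)..t, Kp s)
          = (∫ u in (0:ℝ)..(t - P), Kp u) + ∫ u in (t - P)..t, Kp u :=
        (intervalIntegral.integral_add_adjacent_intervals
          (hKpc.intervalIntegrable _ _) (hKpc.intervalIntegrable _ _)).symm
      have : 0 ≤ ∫ u in (t - P)..t, Kp u :=
        intervalIntegral.integral_nonneg (by linarith) (fun u _ => hKpnn u)
      linarith
    calc (∫ s in (0:ℝ)..t, Kn s) = (∫ u in (-P)..(0:ℝ), Kn (u + P))
          + ∫ u in (0:ℝ)..(t - P), Kn (u + P) := by rw [← hcomp, hsplit]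
      _ = q * ∫ u in (0:ℝ)..(t - P), Kp u := by rw [hzero, hshiftint]; ring
      _ ≤ q * ∫ s in (0:ℝ)..t, Kp s := by
          exact mul_le_mul_of_nonneg_left htail hq0.le
  -- combine
  have hsub : (∫ s in (0:ℝ)..t, (m * Kp s - M * Kn s))
      = m * (∫ s in (0:ℝ)..t, Kp s) - M * ∫ s in (0:ℝ)..t, Kn s := by
    rw [intervalIntegral.integral_sub ((hKpc.intervalIntegrable 0 t).const_mul m)
      ((hKnc.intervalIntegrable 0 t).const_mul M),
      intervalIntegral.integral_const_mul, intervalIntegral.integral_const_mul]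
  have hqMm : q * M ≤ m := hcond
  have hmain : 0 ≤ ∫ s in (0:ℝ)..t, K s * r (t - s) := by
    have h1 : 0 ≤ m * (∫ s in (0:ℝ)..t, Kp s) - M * ∫ s in (0:ℝ)..t, Kn s := by
      have h2 : M * (∫ s in (0:ℝ)..t, Kn s) ≤ M * (q * ∫ s in (0:ℝ)..t, Kp s) :=
        mul_le_mul_of_nonneg_left step2 hM0
      nlinarith
    linarith [step1, hsub ▸ h1]
  have hcoef : 0 ≤ (1 - β)/α := div_nonneg (by linarith) hα.le
  exact mul_nonneg hcoef hmain
end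

section
/- Let E be a real normed vector space, let x, δx ∈ E, let y, δy ∈ ℝ with y ≥ 0 and y + δy ≥ 0, and let ε ≥ ε₀ > 0. Then ‖(x + δx)/(√(y + δy) + ε) − x/(√y + ε)‖ ≤ ‖δx‖/ε₀ + (‖x‖/ε₀²)·√|δy|. -/
open Real

lemma my_sqrt_add_le (a b : ℝ) (ha : 0 ≤ a) (hb : 0 ≤ b) :
    Real.sqrt (a + b) ≤ Real.sqrt a + Real.sqrt b := by
  have h : a + b ≤ (Real.sqrt a + Real.sqrt b)^2 := by
    nlinarith [Real.sq_sqrt ha, Real.sq_sqrt hb,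
      mul_nonneg (Real.sqrt_nonneg a) (Real.sqrt_nonneg b)]
  calc Real.sqrt (a + b) ≤ Real.sqrt ((Real.sqrt a + Real.sqrt b)^2) :=
        Real.sqrt_le_sqrt h
    _ = Real.sqrt a + Real.sqrt b := Real.sqrt_sq (by positivity)

lemma my_abs_sqrt_sub (u v : ℝ) (hu : 0 ≤ u) (hv : 0 ≤ v) :
    |Real.sqrt u - Real.sqrt v| ≤ Real.sqrt |u - v| := by
  rcases le_total v u with h | h
  · rw [abs_of_nonneg (by linarith [Real.sqrt_le_sqrt h] :
      (0:ℝ) ≤ Real.sqrt u - Real.sqrt v), abs_of_nonneg (by linarith)]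
    have := my_sqrt_add_le v (u - v) hv (by linarith)
    rw [add_sub_cancel] at this
    linarith
  · rw [abs_of_nonpos (by linarith [Real.sqrt_le_sqrt h] :
      Real.sqrt u - Real.sqrt v ≤ 0), abs_of_nonpos (by linarith), neg_sub u v]
    have := my_sqrt_add_le u (v - u) hu (by linarith)
    rw [add_sub_cancel] at this
    linarith

theorem stmt11 {E : Type*} [NormedAddCommGroup E] [NormedSpace ℝ E]
    (x δx : E) (y δy ε ε₀ : ℝ)
    (hy : 0 ≤ y) (hyδ : 0 ≤ y + δy) (hε₀ : 0 < ε₀) (hε : ε₀ ≤ ε) :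
    ‖(Real.sqrt (y + δy) + ε)⁻¹ • (x + δx) - (Real.sqrt y + ε)⁻¹ • x‖
      ≤ ‖δx‖/ε₀ + (‖x‖/ε₀^2) * Real.sqrt |δy| := by
  set a := Real.sqrt (y + δy) + ε with ha
  set b := Real.sqrt y + ε with hb
  have ha0 : ε₀ ≤ a := le_add_of_nonneg_left (Real.sqrt_nonneg _) |>.trans' hε
  have hb0 : ε₀ ≤ b := le_add_of_nonneg_left (Real.sqrt_nonneg _) |>.trans' hε
  have hap : 0 < a := lt_of_lt_of_le hε₀ ha0
  have hbp : 0 < b := lt_of_lt_of_le hε₀ hb0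
  have key : a⁻¹ • (x + δx) - b⁻¹ • x = a⁻¹ • δx + (a⁻¹ - b⁻¹) • x := by
    rw [smul_add, sub_smul]; abel
  rw [key]
  have h1 : ‖a⁻¹ • δx‖ ≤ ‖δx‖ / ε₀ := by
    rw [norm_smul, norm_inv, Real.norm_eq_abs, abs_of_pos hap, div_eq_inv_mul]
    gcongr
  have hsq : |b - a| ≤ Real.sqrt |δy| := by
    have : b - a = Real.sqrt y - Real.sqrt (y + δy) := by rw [ha, hb]; ring
    rw [this]
    have := my_abs_sqrt_sub y (y + δy) hy hyδ
    rwa [show y - (y + δy) = -δy by ring, abs_neg] at this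
  have h2 : ‖(a⁻¹ - b⁻¹) • x‖ ≤ ‖x‖ / ε₀ ^ 2 * Real.sqrt |δy| := by
    rw [norm_smul, Real.norm_eq_abs]
    have hab : a⁻¹ - b⁻¹ = (b - a) / (a * b) := by
      field_simp
    rw [hab, abs_div, abs_of_pos (mul_pos hap hbp)]
    have hd : |b - a| / (a * b) ≤ Real.sqrt |δy| / ε₀ ^ 2 := by
      apply div_le_div₀ (Real.sqrt_nonneg _) hsq (by positivity)
      nlinarith
    calc |b - a| / (a * b) * ‖x‖ ≤ Real.sqrt |δy| / ε₀ ^ 2 * ‖x‖ := by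
          gcongr
      _ = ‖x‖ / ε₀ ^ 2 * Real.sqrt |δy| := by ring
  calc ‖a⁻¹ • δx + (a⁻¹ - b⁻¹) • x‖ ≤ ‖a⁻¹ • δx‖ + ‖(a⁻¹ - b⁻¹) • x‖ :=
        norm_add_le _ _
    _ ≤ ‖δx‖ / ε₀ + ‖x‖ / ε₀ ^ 2 * Real.sqrt |δy| := add_le_add h1 h2
end

section
/- Let d ≥ 1, λ > 0, and let g : ℝ → ℝ^d be continuously differentiable. Let M₁ : ℝ → ℝ^d be differentiable with M₁(0) = 0 and M₁'(t) + λ·M₁(t) = λ·g(t) for all t ≥ 0. Then for every t ≥ 0, the tracking error satisfies ‖g(t) − M₁(t)‖ ≤ e^{−λt}·‖g(0)‖ + (1/λ)·sup_{s ∈ [0,t]} ‖g'(s)‖. -/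
open Real

theorem stmt12 (d : ℕ) (hd : 1 ≤ d) (lam : ℝ) (hlam : 0 < lam)
    (g M₁ : ℝ → EuclideanSpace ℝ (Fin d))
    (hg : ContDiff ℝ 1 g)
    (hM : Differentiable ℝ M₁) (hM0 : M₁ 0 = 0)
    (hODE : ∀ t ≥ (0:ℝ), deriv M₁ t + lam • M₁ t = lam • g t) :
    ∀ t ≥ (0:ℝ), ‖g t - M₁ t‖ ≤ Real.exp (-lam * t) * ‖g 0‖ +
      (1/lam) * sSup ((fun s => ‖deriv g s‖) '' Set.Icc 0 t) := by
  intro t ht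
  set K : ℝ := sSup ((fun s => ‖deriv g s‖) '' Set.Icc 0 t) with hKdef
  have hgd : Differentiable ℝ g := hg.differentiable one_ne_zero
  have hgc : Continuous (deriv g) := hg.continuous_deriv le_rfl
  have hbdd : BddAbove ((fun s => ‖deriv g s‖) '' Set.Icc 0 t) :=
    (isCompact_Icc.image hgc.norm).bddAbove
  have hKle : ∀ s ∈ Set.Icc (0:ℝ) t, ‖deriv g s‖ ≤ K := fun s hs =>
    le_csSup hbdd ⟨s, hs, rfl⟩
  have hK0 : 0 ≤ K := le_trans (norm_nonneg _) (hKle 0 ⟨le_refl 0, ht⟩)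
  -- derivative of the integrating-factor function
  have key : ∀ s ∈ Set.Icc (0:ℝ) t,
      HasDerivAt (fun u => Real.exp (lam*u) • (g u - M₁ u))
        (Real.exp (lam*s) • deriv g s) s := by
    intro s hs
    have h1 : HasDerivAt (fun u => Real.exp (lam*u)) (lam * Real.exp (lam*s)) s := by
      have h := (Real.hasDerivAt_exp (lam*s)).comp s ((hasDerivAt_id s).const_mul lam)
      exact h.congr_deriv (by ring)
    have hEd : HasDerivAt (fun u => g u - M₁ u) (deriv g s - deriv M₁ s) s :=
      (hgd s).hasDerivAt.sub (hM s).hasDerivAt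
    have hODEs : deriv M₁ s = lam • g s - lam • M₁ s := eq_sub_of_add_eq (hODE s hs.1)
    have h2 := h1.smul hEd
    refine h2.congr_deriv ?_
    rw [hODEs]
    module
  have hint : IntervalIntegrable (fun s => Real.exp (lam*s) • deriv g s)
      MeasureTheory.volume 0 t :=
    ((Real.continuous_exp.comp (continuous_const.mul continuous_id)).smul
      hgc).intervalIntegrable 0 t
  have hFTC : ∫ s in (0:ℝ)..t, Real.exp (lam*s) • deriv g s
      = Real.exp (lam*t) • (g t - M₁ t) - Real.exp (lam*0) • (g 0 - M₁ 0) :=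
    intervalIntegral.integral_eq_sub_of_hasDerivAt
      (fun s hs => key s (by rwa [Set.uIcc_of_le ht] at hs)) hint
  have hFTC' : Real.exp (lam*t) • (g t - M₁ t)
      = (g 0) + ∫ s in (0:ℝ)..t, Real.exp (lam*s) • deriv g s := by
    rw [hFTC, hM0]
    simp
  -- bound the integral
  have hnormint : ‖∫ s in (0:ℝ)..t, Real.exp (lam*s) • deriv g s‖
      ≤ ∫ s in (0:ℝ)..t, Real.exp (lam*s) * K := by
    refine le_trans (intervalIntegral.norm_integral_le_integral_norm ht) ?_
    apply intervalIntegral.integral_mono_on ht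
    · exact (((Real.continuous_exp.comp (continuous_const.mul continuous_id)).smul
        hgc).norm).intervalIntegrable 0 t
    · exact ((Real.continuous_exp.comp (continuous_const.mul continuous_id)).mul
        continuous_const).intervalIntegrable 0 t
    · intro s hs
      rw [norm_smul, Real.norm_eq_abs, abs_of_pos (Real.exp_pos _)]
      exact mul_le_mul_of_nonneg_left (hKle s hs) (Real.exp_pos _).le
  have hintval : ∫ s in (0:ℝ)..t, Real.exp (lam*s) * K
      = (K/lam) * Real.exp (lam*t) - (K/lam) * Real.exp (lam*0) := by
    apply intervalIntegral.integral_eq_sub_of_hasDerivAt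
    · intro s hs
      have h1 : HasDerivAt (fun u => Real.exp (lam*u)) (lam * Real.exp (lam*s)) s := by
        have h := (Real.hasDerivAt_exp (lam*s)).comp s ((hasDerivAt_id s).const_mul lam)
        exact h.congr_deriv (by ring)
      have := h1.const_mul (K/lam)
      refine this.congr_deriv ?_
      field_simp
    · exact ((Real.continuous_exp.comp (continuous_const.mul continuous_id)).mul
        continuous_const).intervalIntegrable 0 t
  have hmain : Real.exp (lam*t) * ‖g t - M₁ t‖
      ≤ ‖g 0‖ + K/lam * Real.exp (lam*t) := by
    have h1 : ‖Real.exp (lam*t) • (g t - M₁ t)‖ = Real.exp (lam*t) * ‖g t - M₁ t‖ := by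
      rw [norm_smul, Real.norm_eq_abs, abs_of_pos (Real.exp_pos _)]
    calc Real.exp (lam*t) * ‖g t - M₁ t‖
        = ‖Real.exp (lam*t) • (g t - M₁ t)‖ := h1.symm
      _ ≤ ‖g 0‖ + ‖∫ s in (0:ℝ)..t, Real.exp (lam*s) • deriv g s‖ := by
          rw [hFTC']; exact norm_add_le _ _
      _ ≤ ‖g 0‖ + ((K/lam) * Real.exp (lam*t) - (K/lam) * Real.exp (lam*0)) := by
          have := hnormint.trans hintval.le
          linarith
      _ ≤ ‖g 0‖ + K/lam * Real.exp (lam*t) := by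
          have : 0 ≤ (K/lam) * Real.exp (lam*0) := by positivity
          linarith
  -- finish: multiply by exp(-lam t)
  have hinv : Real.exp (-lam*t) * Real.exp (lam*t) = 1 := by
    rw [← Real.exp_add]; ring_nf; exact Real.exp_zero
  have hfinal : ‖g t - M₁ t‖
      = Real.exp (-lam*t) * (Real.exp (lam*t) * ‖g t - M₁ t‖) := by
    rw [← mul_assoc, hinv, one_mul]
  rw [hfinal]
  calc Real.exp (-lam*t) * (Real.exp (lam*t) * ‖g t - M₁ t‖)
      ≤ Real.exp (-lam*t) * (‖g 0‖ + K/lam * Real.exp (lam*t)) :=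
        mul_le_mul_of_nonneg_left hmain (Real.exp_pos _).le
    _ = Real.exp (-lam*t) * ‖g 0‖ + (Real.exp (-lam*t) * Real.exp (lam*t)) * (K/lam) := by
        ring
    _ = Real.exp (-lam*t) * ‖g 0‖ + (1/lam) * K := by
        rw [hinv]; ring
end

section
/- Let d ≥ 1, λ₁ > 0, λ₂ > 0, let g : ℝ → ℝ^d be continuous, and fix t ≥ 0. Define M₁(t) := ∫₀ᵗ λ₁·e^{−λ₁τ}·g(t−τ) dτ and M₂(t) := ∫₀ᵗ λ₂·e^{−λ₂τ}·‖g(t−τ)‖² dτ. Then ‖M₁(t)‖² ≤ (∫₀ᵗ (λ₁²/λ₂)·e^{−(2λ₁−λ₂)τ} dτ) · M₂(t). -/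
open Real MeasureTheory

lemma aux_memLp (f : ℝ → ℝ) (hf : Continuous f) (t : ℝ) (p : ENNReal) :
    MemLp f p (volume.restrict (Set.Ioc (0:ℝ) t)) := by
  obtain ⟨C, hC⟩ := (isCompact_Icc (a := (0:ℝ)) (b := t)).exists_bound_of_continuousOn
    hf.continuousOn
  refine MemLp.of_bound hf.aestronglyMeasurable.restrict C ?_
  refine (ae_restrict_iff' measurableSet_Ioc).2 (Filter.Eventually.of_forall fun x hx => ?_)
  exact hC x (Set.Ioc_subset_Icc_self hx)

theorem stmt14 (d : ℕ) (hd : 1 ≤ d) (lam₁ lam₂ : ℝ) (h1 : 0 < lam₁) (h2 : 0 < lam₂)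
    (g : ℝ → EuclideanSpace ℝ (Fin d)) (hg : Continuous g) (t : ℝ) (ht : 0 ≤ t) :
    ‖∫ τ in (0:ℝ)..t, (lam₁ * Real.exp (-lam₁ * τ)) • g (t - τ)‖^2
      ≤ (∫ τ in (0:ℝ)..t, (lam₁^2/lam₂) * Real.exp (-(2*lam₁ - lam₂) * τ))
        * ∫ τ in (0:ℝ)..t, lam₂ * Real.exp (-lam₂ * τ) * ‖g (t - τ)‖^2 := by
  set μ := volume.restrict (Set.Ioc (0:ℝ) t) with hμ
  set u : ℝ → ℝ := fun τ => lam₁ * Real.exp (-lam₁ * τ) / Real.sqrt (lam₂ * Real.exp (-lam₂ * τ)) with hu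
  set v : ℝ → ℝ := fun τ => Real.sqrt (lam₂ * Real.exp (-lam₂ * τ)) * ‖g (t - τ)‖ with hv
  have hpos : ∀ τ : ℝ, 0 < lam₂ * Real.exp (-lam₂ * τ) := fun τ => mul_pos h2 (Real.exp_pos _)
  have hsq : ∀ τ : ℝ, Real.sqrt (lam₂ * Real.exp (-lam₂ * τ)) ≠ 0 :=
    fun τ => (Real.sqrt_pos.2 (hpos τ)).ne'
  have hcont2 : Continuous fun τ : ℝ => lam₂ * Real.exp (-lam₂ * τ) := by continuity
  have hucont : Continuous u := by
    apply Continuous.div (by continuity) (Real.continuous_sqrt.comp hcont2) hsq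
  have hvcont : Continuous v := by
    exact ((Real.continuous_sqrt.comp hcont2).mul ((hg.comp (by continuity)).norm))
  have hunn : 0 ≤ᵐ[μ] u := Filter.Eventually.of_forall fun τ => by
    exact div_nonneg (mul_pos h1 (Real.exp_pos _)).le (Real.sqrt_nonneg _)
  have hvnn : 0 ≤ᵐ[μ] v := Filter.Eventually.of_forall fun τ => by
    exact mul_nonneg (Real.sqrt_nonneg _) (norm_nonneg _)
  have key : ∫ τ, u τ * v τ ∂μ
      ≤ (∫ τ, u τ ^ (2:ℝ) ∂μ) ^ ((1:ℝ)/2) * (∫ τ, v τ ^ (2:ℝ) ∂μ) ^ ((1:ℝ)/2) := by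
    refine integral_mul_le_Lp_mul_Lq_of_nonneg Real.HolderConjugate.two_two hunn hvnn ?_ ?_
    · simpa using aux_memLp u hucont t 2
    · simpa using aux_memLp v hvcont t 2
  -- identities
  have huv : ∀ τ : ℝ, u τ * v τ = lam₁ * Real.exp (-lam₁ * τ) * ‖g (t - τ)‖ := by
    intro τ
    simp only [hu, hv]
    field_simp
  have hu2 : ∀ τ : ℝ, u τ ^ (2:ℝ) = (lam₁^2/lam₂) * Real.exp (-(2*lam₁ - lam₂) * τ) := by
    intro τ
    rw [Real.rpow_two]
    simp only [hu]
    rw [div_pow, Real.sq_sqrt (hpos τ).le, mul_pow, ← Real.exp_nat_mul]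
    push_cast
    rw [show (2:ℝ) * (-lam₁ * τ) = (-(2*lam₁ - lam₂) * τ) + (-lam₂ * τ) by ring, Real.exp_add]
    field_simp
  have hv2 : ∀ τ : ℝ, v τ ^ (2:ℝ) = lam₂ * Real.exp (-lam₂ * τ) * ‖g (t - τ)‖^2 := by
    intro τ
    rw [Real.rpow_two]
    simp only [hv]
    rw [mul_pow, Real.sq_sqrt (hpos τ).le]
  have hA : (0:ℝ) ≤ ∫ τ, u τ ^ (2:ℝ) ∂μ :=
    integral_nonneg fun τ => Real.rpow_natCast (u τ) 2 ▸ by positivity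
  have hB : (0:ℝ) ≤ ∫ τ, v τ ^ (2:ℝ) ∂μ :=
    integral_nonneg fun τ => Real.rpow_natCast (v τ) 2 ▸ by positivity
  have step1 : ‖∫ τ in (0:ℝ)..t, (lam₁ * Real.exp (-lam₁ * τ)) • g (t - τ)‖
      ≤ ∫ τ, u τ * v τ ∂μ := by
    calc ‖∫ τ in (0:ℝ)..t, (lam₁ * Real.exp (-lam₁ * τ)) • g (t - τ)‖
        ≤ ∫ τ in Set.uIoc (0:ℝ) t, ‖(lam₁ * Real.exp (-lam₁ * τ)) • g (t - τ)‖ :=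
          intervalIntegral.norm_integral_le_integral_norm_uIoc
      _ = ∫ τ, u τ * v τ ∂μ := by
          rw [Set.uIoc_of_le ht]
          refine integral_congr_ae (Filter.Eventually.of_forall fun τ => ?_)
          show ‖(lam₁ * Real.exp (-lam₁ * τ)) • g (t - τ)‖ = u τ * v τ
          rw [huv τ, norm_smul, Real.norm_of_nonneg (mul_pos h1 (Real.exp_pos _)).le]
  have hI : (0:ℝ) ≤ ∫ τ, u τ * v τ ∂μ :=
    integral_nonneg fun τ => (huv τ) ▸ by positivity
  have sq_le : ‖∫ τ in (0:ℝ)..t, (lam₁ * Real.exp (-lam₁ * τ)) • g (t - τ)‖^2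
      ≤ (∫ τ, u τ ^ (2:ℝ) ∂μ) * (∫ τ, v τ ^ (2:ℝ) ∂μ) := by
    have h1' := pow_le_pow_left₀ (norm_nonneg _) (step1.trans key) 2
    refine h1'.trans (le_of_eq ?_)
    rw [mul_pow, ← Real.rpow_natCast ((∫ τ, u τ ^ (2:ℝ) ∂μ) ^ ((1:ℝ)/2)) 2,
      ← Real.rpow_natCast ((∫ τ, v τ ^ (2:ℝ) ∂μ) ^ ((1:ℝ)/2)) 2,
      ← Real.rpow_mul hA, ← Real.rpow_mul hB]
    norm_num
  refine sq_le.trans (le_of_eq ?_)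
  rw [intervalIntegral.integral_of_le ht, intervalIntegral.integral_of_le ht]
  congr 1
  · exact integral_congr_ae (Filter.Eventually.of_forall fun τ => hu2 τ)
  · exact integral_congr_ae (Filter.Eventually.of_forall fun τ => hv2 τ)
end
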